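/- For every integer n ≥ 4 and all distinct i, j ∈ {1,…,n}, there are exactly (n−2)!/2 edges of AN_n having one endpoint in the subnetwork AN_n^i and the other endpoint in the subnetwork AN_n^j. -/

import Mathlib

open SimpleGraph

/-- Vertices of the alternating group network: even permutations of `{1,…,n}`
(modeled as permutations of `Fin n` with sign `1`). A permutation `p` is viewed
as the sequence `p₁p₂⋯p_n` where `p_j` (the symbol in position `j`) is `p ⟨j-1,_⟩`. -/
abbrev ANVertex (n : ℕ) : Type := {p : Equiv.Perm (Fin n) // Equiv.Perm.sign p = 1}

/-- The adjacency relation of the `n`-dimensional alternating group network `AN_n`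
(positions are 1-based in the informal description; position `j` is `⟨j-1,_⟩ : Fin n`). -/
def ANAdj (n : ℕ) (p q : Equiv.Perm (Fin n)) : Prop :=
  ∃ hn : 3 ≤ n,
    ((p ⟨0, by omega⟩ = q ⟨1, by omega⟩ ∧ p ⟨1, by omega⟩ = q ⟨2, by omega⟩ ∧
      p ⟨2, by omega⟩ = q ⟨0, by omega⟩ ∧ ∀ j : Fin n, 3 ≤ (j : ℕ) → p j = q j) ∨
     (p ⟨0, by omega⟩ = q ⟨2, by omega⟩ ∧ p ⟨1, by omega⟩ = q ⟨0, by omega⟩ ∧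
      p ⟨2, by omega⟩ = q ⟨1, by omega⟩ ∧ ∀ j : Fin n, 3 ≤ (j : ℕ) → p j = q j) ∨
     (∃ i : Fin n, 3 ≤ (i : ℕ) ∧ p ⟨0, by omega⟩ = q ⟨1, by omega⟩ ∧
      p ⟨1, by omega⟩ = q ⟨0, by omega⟩ ∧ p ⟨2, by omega⟩ = q i ∧ p i = q ⟨2, by omega⟩ ∧
      ∀ j : Fin n, 3 ≤ (j : ℕ) → j ≠ i → p j = q j))

/-- The `n`-dimensional alternating group network `AN_n`. -/
def AN (n : ℕ) : SimpleGraph (ANVertex n) where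
  Adj x y := ANAdj n x.1 y.1
  symm := by
    constructor
    rintro x y ⟨hn, h⟩
    refine ⟨hn, ?_⟩
    rcases h with ⟨h1, h2, h3, h4⟩ | ⟨h1, h2, h3, h4⟩ | ⟨i, hi, h1, h2, h3, h4, h5⟩
    · exact Or.inr (Or.inl ⟨h3.symm, h1.symm, h2.symm, fun j hj => (h4 j hj).symm⟩)
    · exact Or.inl ⟨h2.symm, h3.symm, h1.symm, fun j hj => (h4 j hj).symm⟩
    · exact Or.inr (Or.inr ⟨i, hi, h2.symm, h1.symm, h4.symm, h3.symm,
        fun j hj hji => (h5 j hj hji).symm⟩)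
  loopless := by
    constructor
    rintro x ⟨hn, ⟨h1, -⟩ | ⟨h1, -⟩ | ⟨i, hi, h1, -⟩⟩ <;>
      simpa [Fin.ext_iff] using x.1.injective h1

/-- The `ℓ`-component connectivity `κ_ℓ(G)`: the minimum number of vertices whose
removal from `G` results in a graph with at least `ℓ` connected components or a
graph with fewer than `ℓ` vertices. -/
noncomputable def componentConnectivity {V : Type*} [Fintype V] (G : SimpleGraph V)
    (l : ℕ) : ℕ :=
  sInf {k | ∃ F : Finset V, F.card = k ∧
    (l ≤ Nat.card ((G.induce (↑F : Set V)ᶜ).ConnectedComponent) ∨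
     Fintype.card V - F.card < l)}

/-!
Edges of types (i) and (ii), and those of type (iii) with index `k < n`, keep the last symbol.
Hence an edge from `AN_n^i` to `AN_n^j` is `{p, p * (1 2)(3 n)}` for its endpoint `p` with
`p_n = i`, and then `p_3 = j`. So the cross edges correspond to the even permutations with
`p_3 = j` and `p_n = i`; right multiplication by a transposition fixing positions `3` and `n`
exchanges these with the odd ones, and together there are `(n - 2)!` of them.
-/

open Equiv Equiv.Perm Nat

theorem Finset.card_compl_pair {α : Type*} [Fintype α] [DecidableEq α] {a b : α}
    (hab : a ≠ b) :
    Finset.card ({a, b}ᶜ : Finset α) = Fintype.card α - 2 := by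
  rw [Finset.card_compl, Finset.card_pair hab]

namespace Equiv.Perm

variable {α : Type*} [Fintype α] [DecidableEq α]

theorem card_apply_eq_self_and_apply_eq_self {a b : α} (hab : a ≠ b) :
    Fintype.card {p : Perm α // p a = a ∧ p b = b} = (Fintype.card α - 2)! := by
  let e : {p : Perm α // p a = a ∧ p b = b} ≃
      {p : Perm α // ∀ x, x ∉ ({a, b}ᶜ : Finset α) → p x = x} :=
    Equiv.subtypeEquivRight fun p =>
      ⟨fun ⟨ha, hb⟩ x hx => by by_cases x = a <;> simp_all,
        fun h => ⟨h a (by simp), h b (by simp)⟩⟩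
  rw [Fintype.card_congr (e.trans (Perm.subtypeEquivSubtypePerm _).symm), Fintype.card_perm,
    Fintype.card_coe, Finset.card_compl_pair hab]

omit [Fintype α] in
theorem exists_apply_eq_and_apply_eq {a b v w : α} (hab : a ≠ b) (hvw : v ≠ w) :
    ∃ p : Perm α, p a = v ∧ p b = w := by
  refine ⟨swap (swap a v b) w * swap a v, ?_, by simp⟩
  have : v ≠ swap a v b := by simpa using (swap a v).injective.ne hab
  simp [swap_apply_of_ne_of_ne this hvw]

theorem card_apply_eq_and_apply_eq {a b v w : α} (hab : a ≠ b) (hvw : v ≠ w) :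
    Fintype.card {p : Perm α // p a = v ∧ p b = w} = (Fintype.card α - 2)! := by
  obtain ⟨p₀, ha, hb⟩ := exists_apply_eq_and_apply_eq hab hvw
  rw [← card_apply_eq_self_and_apply_eq_self hab]
  refine Fintype.card_congr (Equiv.subtypeEquiv (Equiv.mulLeft p₀⁻¹) fun p => ?_)
  simp only [coe_mulLeft, Perm.mul_apply, inv_eq_iff_eq, ha, hb]

theorem two_mul_card_sign_eq_one_and {P : Perm α → Prop} [DecidablePred P] {τ : Perm α}
    (hτ : sign τ = -1) (hP : ∀ p, P (p * τ) ↔ P p) :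
    2 * Fintype.card {p : Perm α // sign p = 1 ∧ P p} = Fintype.card {p : Perm α // P p} := by
  have hodd : Fintype.card {p : Perm α // sign p = 1 ∧ P p} =
      Fintype.card {p : Perm α // ¬sign p = 1 ∧ P p} := by
    refine Fintype.card_congr (Equiv.subtypeEquiv (Equiv.mulRight τ) fun p => ?_)
    rcases Int.units_eq_one_or (sign p) with h | h <;> simp [hP, hτ, h]
  rw [two_mul]
  nth_rw 2 [hodd]
  rw [← Fintype.card_subtype_or_disjoint _ _
    fun _ h₁ h₂ p hp => (h₂ p hp).1 (h₁ p hp).1]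
  exact Fintype.card_congr (Equiv.subtypeEquivRight fun p => by tauto)

theorem card_sign_eq_one_and_apply_eq_and_apply_eq (hα : 4 ≤ Fintype.card α) {a b v w : α}
    (hab : a ≠ b) (hvw : v ≠ w) :
    Fintype.card {p : Perm α // sign p = 1 ∧ p a = v ∧ p b = w} =
      (Fintype.card α - 2)! / 2 := by
  obtain ⟨c, hc, d, hd, hcd⟩ := (Finset.one_lt_card (s := {a, b}ᶜ)).mp (by
    rw [Finset.card_compl_pair hab]; omega)
  have := two_mul_card_sign_eq_one_and (P := fun p => p a = v ∧ p b = w) (sign_swap hcd)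
    fun p => by
      simp only [Finset.mem_compl, Finset.mem_insert, Finset.mem_singleton, not_or] at hc hd
      simp [swap_apply_of_ne_of_ne, hc, hd, Ne.symm]
  rw [card_apply_eq_and_apply_eq hab hvw] at this
  omega

end Equiv.Perm

variable {n : ℕ}

/-- The generator `(1 2)(3 k)` of the paper, with 0-based positions: an edge of type (iii) with
index `k` joins `p` and `p * ANGen k hk`. -/
def ANGen (k : Fin n) (hk : 3 ≤ (k : ℕ)) : Perm (Fin n) :=
  swap ⟨0, by omega⟩ ⟨1, by omega⟩ * swap ⟨2, by omega⟩ k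

section
variable (k : Fin n) (hk : 3 ≤ (k : ℕ))

theorem sign_ANGen : sign (ANGen k hk) = 1 := by
  rw [ANGen, Perm.sign_mul, sign_swap, sign_swap] <;> simp [Fin.ext_iff]; omega

theorem ANGen_apply_of_ne {j : Fin n} (hj : 3 ≤ (j : ℕ)) (hjk : j ≠ k) :
    ANGen k hk j = j := by
  simp only [ANGen, Perm.mul_apply, swap_apply_def]
  grind

theorem ANGen_apply_zero : ANGen k hk ⟨0, by omega⟩ = ⟨1, by omega⟩ := by
  simp only [ANGen, Perm.mul_apply, swap_apply_def]
  grind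

theorem ANGen_apply_one : ANGen k hk ⟨1, by omega⟩ = ⟨0, by omega⟩ := by
  simp only [ANGen, Perm.mul_apply, swap_apply_def]
  grind

theorem ANGen_apply_two : ANGen k hk ⟨2, by omega⟩ = k := by
  simp only [ANGen, Perm.mul_apply, swap_apply_def]
  grind

theorem ANGen_apply_self : ANGen k hk k = ⟨2, by omega⟩ := by
  simp only [ANGen, Perm.mul_apply, swap_apply_def]
  grind

theorem ANAdj_mul_ANGen (p : Perm (Fin n)) : ANAdj n p (p * ANGen k hk) := by
  refine ⟨by omega, Or.inr (Or.inr ⟨k, hk, ?_, ?_, ?_, ?_, fun j hj hjk => ?_⟩)⟩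
  all_goals simp only [Perm.mul_apply, ANGen_apply_zero, ANGen_apply_one, ANGen_apply_two,
    ANGen_apply_self]
  rw [ANGen_apply_of_ne k hk hj hjk]

theorem ANAdj.eq_mul_ANGen {p q : Perm (Fin n)} (h : ANAdj n p q) (hpq : p k ≠ q k) :
    q = p * ANGen k hk := by
  obtain ⟨hn, ⟨-, -, -, h⟩ | ⟨-, -, -, h⟩ | ⟨l, hl, h0, h1, h2, hl2, h⟩⟩ := h
  · exact absurd (h k hk) hpq
  · exact absurd (h k hk) hpq
  obtain rfl : l = k := by_contra fun hlk => hpq (h k hk (Ne.symm hlk))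
  ext z
  obtain rfl | rfl | rfl | rfl | ⟨hz, hzl⟩ : z = ⟨0, by omega⟩ ∨ z = ⟨1, by omega⟩ ∨
      z = ⟨2, by omega⟩ ∨ z = l ∨ (3 ≤ (z : ℕ) ∧ z ≠ l) := by
    simp only [Fin.ext_iff]; omega
  · rw [Perm.mul_apply, ANGen_apply_zero, h1]
  · rw [Perm.mul_apply, ANGen_apply_one, h0]
  · rw [Perm.mul_apply, ANGen_apply_two, hl2]
  · rw [Perm.mul_apply, ANGen_apply_self, h2]
  · rw [Perm.mul_apply, ANGen_apply_of_ne l hl hz hzl, h z hz hzl]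

end

def ANVertex.mulGen (x : ANVertex n) (k : Fin n) (hk : 3 ≤ (k : ℕ)) : ANVertex n :=
  ⟨x.1 * ANGen k hk, by rw [Perm.sign_mul, x.2, sign_ANGen, one_mul]⟩

section
variable (k : Fin n) (hk : 3 ≤ (k : ℕ)) {i j : Fin n}

theorem AN_cross_edges_eq_image (hij : i ≠ j) :
    {e : Sym2 (ANVertex n) | e ∈ (AN n).edgeSet ∧
      ∃ x y : ANVertex n, e = s(x, y) ∧ x.1 k = i ∧ y.1 k = j} =
      (fun x => s(x, x.mulGen k hk)) '' {x | x.1 ⟨2, by omega⟩ = j ∧ x.1 k = i} := by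
  ext e
  constructor
  · rintro ⟨hxy, x, y, rfl, hx, hy⟩
    have hy' : y.1 = x.1 * ANGen k hk := ANAdj.eq_mul_ANGen k hk hxy (by rw [hx, hy]; exact hij)
    refine ⟨x, ⟨?_, hx⟩, ?_⟩
    · rw [← hy, hy', Perm.mul_apply, ANGen_apply_self]
    · simp only [ANVertex.mulGen, ← hy']
  · rintro ⟨x, ⟨hx2, hx⟩, rfl⟩
    refine ⟨ANAdj_mul_ANGen k hk x.1, x, _, rfl, hx, ?_⟩
    rw [ANVertex.mulGen, Perm.mul_apply, ANGen_apply_self, hx2]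

theorem injOn_mulGen (hij : i ≠ j) :
    Set.InjOn (fun x : ANVertex n => s(x, x.mulGen k hk))
      {x | x.1 ⟨2, by omega⟩ = j ∧ x.1 k = i} := by
  rintro x ⟨-, hx⟩ y ⟨hy2, -⟩ hxy
  rcases Sym2.eq_iff.mp hxy with ⟨h, -⟩ | ⟨h, -⟩
  · exact h
  · refine absurd ?_ hij
    rw [← hx, h, ANVertex.mulGen, Perm.mul_apply, ANGen_apply_self, hy2]

end

theorem ncard_ANVertex_apply_eq_and_apply_eq (hn : 4 ≤ n) {a b v w : Fin n} (hab : a ≠ b)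
    (hvw : v ≠ w) : {x : ANVertex n | x.1 a = v ∧ x.1 b = w}.ncard = (n - 2)! / 2 := by
  rw [← Nat.card_coe_set_eq, Set.coe_ofPred, Nat.card_congr (Equiv.subtypeSubtypeEquivSubtypeInter
      (fun p : Perm (Fin n) => sign p = 1) (fun p => p a = v ∧ p b = w)),
    Nat.card_eq_fintype_card, card_sign_eq_one_and_apply_eq_and_apply_eq (by simpa) hab hvw,
    Fintype.card_fin]

/-- For every `n ≥ 4` and distinct `i, j`, there are exactly `(n−2)!/2` edges of
`AN_n` with one endpoint in the subnetwork `AN_n^i` and the other in `AN_n^j`. -/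
theorem AN_cross_edges_count (n : ℕ) (hn : 4 ≤ n) (i j : Fin n) (hij : i ≠ j) :
    {e : Sym2 (ANVertex n) | e ∈ (AN n).edgeSet ∧
      ∃ x y : ANVertex n, e = s(x, y) ∧
        x.1 ⟨n - 1, by omega⟩ = i ∧ y.1 ⟨n - 1, by omega⟩ = j}.ncard =
      Nat.factorial (n - 2) / 2 := by
  have hlast : 3 ≤ n - 1 := by omega
  rw [AN_cross_edges_eq_image ⟨n - 1, by omega⟩ hlast hij,
    (injOn_mulGen _ hlast hij).ncard_image,
    ncard_ANVertex_apply_eq_and_apply_eq hn (by simp [Fin.ext_iff]; omega) hij.symm]
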